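/- arXiv:quant-ph/0312010 — 2 statements merged into one kernel-verified Lean document; each statement's English description precedes it below -/
import Mathlib

section
/- (Example 2, trade-off) Let ψ = (0.4, 0.4, 0.1, 0.1), φ = (0.5, 0.25, 0.2, 0.05) and c = (0.6, 0.4). Then ψ^{⊗5} is not majorized by φ^{⊗5}, but ψ^{⊗5}⊗c is majorized by φ^{⊗5}⊗c; that is, five copies of ψ cannot be converted to five copies of φ even collectively, yet one copy of the catalyst c makes the five-copy transformation possible. -/
open Finset

/-- Sum of the `l` largest entries of `x` (maximum over subsets of size `l`),
counted with multiplicity: this is `S_l(x)` from the paper. -/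
noncomputable def topSum {ι : Type*} [Fintype ι] (x : ι → ℝ) (l : ℕ) : ℝ :=
  sSup {s : ℝ | ∃ A : Finset ι, A.card = l ∧ s = ∑ i ∈ A, x i}

/-- Sum of the `l` smallest entries of `x` (minimum over subsets of size `l`). -/
noncomputable def botSum {ι : Type*} [Fintype ι] (x : ι → ℝ) (l : ℕ) : ℝ :=
  sInf {s : ℝ | ∃ A : Finset ι, A.card = l ∧ s = ∑ i ∈ A, x i}

/-- `x` is majorized by `y` (written `x ≺ y`): for every `1 ≤ l ≤ N`,
the sum of the `l` largest entries of `x` is at most that of `y`. -/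
def Majorized {ι : Type*} [Fintype ι] (x y : ι → ℝ) : Prop :=
  ∀ l : ℕ, 1 ≤ l → l ≤ Fintype.card ι → topSum x l ≤ topSum y l

/-- Tensor product of two vectors: all pairwise products of entries. -/
def tensor {ι κ : Type*} (x : ι → ℝ) (z : κ → ℝ) : ι × κ → ℝ :=
  fun p => x p.1 * z p.2

/-- `p`-fold tensor power of a vector. -/
def tensorPow {ι : Type*} (x : ι → ℝ) (p : ℕ) : (Fin p → ι) → ℝ :=
  fun f => ∏ j, x (f j)

/-- Sum of the first `l` entries of a vector `x : Fin n → ℝ`. -/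
def prefixSum {n : ℕ} (x : Fin n → ℝ) (l : ℕ) : ℝ :=
  ∑ j ∈ Finset.univ.filter (fun j : Fin n => (j : ℕ) < l), x j

/-- Sum of the entries of `x : Fin n → ℝ` from index `l` (0-based) on. -/
def suffixSum {n : ℕ} (x : Fin n → ℝ) (l : ℕ) : ℝ :=
  ∑ j ∈ Finset.univ.filter (fun j : Fin n => l ≤ (j : ℕ)), x j

/-- `E_l(x) = 1 - S_{l-1}(x)`: the sum of the entries of the probability vector `x`
from the `l`-th largest to the smallest. -/
noncomputable def Evec {ι : Type*} [Fintype ι] (x : ι → ℝ) (l : ℕ) : ℝ :=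
  1 - topSum x (l - 1)

/-- Vidal conversion probability `P(x → y) = min_{1 ≤ l ≤ N} E_l(x)/E_l(y)`. -/
noncomputable def vidalP {ι : Type*} [Fintype ι] (x y : ι → ℝ) : ℝ :=
  sInf {r : ℝ | ∃ l : ℕ, 1 ≤ l ∧ l ≤ Fintype.card ι ∧ r = Evec x l / Evec y l}

/-- Nonincreasing rearrangement of the entries of `x`, as a list. -/
noncomputable def sortedDesc {ι : Type*} [Fintype ι] (x : ι → ℝ) : List ℝ :=
  ((Finset.univ.val.map x).sort (· ≤ ·)).reverse


def LX1 : List ℕ :=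
  List.replicate 32 32768 ++ List.replicate 160 8192 ++ List.replicate 320 2048 ++ List.replicate 320 512 ++ List.replicate 160 128 ++ List.replicate 32 32

def LY1 : List ℕ :=
  List.replicate 1 100000 ++ List.replicate 5 50000 ++ List.replicate 5 40000 ++ List.replicate 10 25000 ++ List.replicate 20 20000 ++ List.replicate 10 16000 ++ List.replicate 10 12500 ++ List.replicate 35 10000 ++ List.replicate 30 8000 ++ List.replicate 10 6400 ++ List.replicate 5 6250 ++ List.replicate 40 5000 ++ List.replicate 50 4000 ++ List.replicate 20 3200 ++ List.replicate 1 3125 ++ List.replicate 5 2560 ++ List.replicate 35 2500 ++ List.replicate 70 2000 ++ List.replicate 40 1600 ++ List.replicate 5 1280 ++ List.replicate 20 1250 ++ List.replicate 1 1024 ++ List.replicate 70 1000 ++ List.replicate 60 800 ++ List.replicate 20 640 ++ List.replicate 5 625 ++ List.replicate 50 500 ++ List.replicate 60 400 ++ List.replicate 20 320 ++ List.replicate 5 256 ++ List.replicate 30 250 ++ List.replicate 60 200 ++ List.replicate 30 160 ++ List.replicate 10 125 ++ List.replicate 40 100 ++ List.replicate 30 80 ++ List.replicate 10 64 ++ List.replicate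 20 50 ++ List.replicate 20 40 ++ List.replicate 10 25 ++ List.replicate 20 20 ++ List.replicate 10 16 ++ List.replicate 5 10 ++ List.replicate 5 5 ++ List.replicate 5 4 ++ List.replicate 1 1

def LX2 : List ℕ :=
  List.replicate 32 98304 ++ List.replicate 32 65536 ++ List.replicate 160 24576 ++ List.replicate 160 16384 ++ List.replicate 320 6144 ++ List.replicate 320 4096 ++ List.replicate 320 1536 ++ List.replicate 320 1024 ++ List.replicate 160 384 ++ List.replicate 160 256 ++ List.replicate 32 96 ++ List.replicate 32 64

def LY2 : List ℕ :=
  List.replicate 1 300000 ++ List.replicate 1 200000 ++ List.replicate 5 150000 ++ List.replicate 5 120000 ++ List.replicate 5 100000 ++ List.replicate 5 80000 ++ List.replicate 10 75000 ++ List.replicate 20 60000 ++ List.replicate 10 50000 ++ List.replicate 10 48000 ++ List.replicate 20 40000 ++ List.replicate 10 37500 ++ List.replicate 10 32000 ++ List.replicate 35 30000 ++ List.replicate 10 25000 ++ List.replicate 30 24000 ++ List.replicate 35 20000 ++ List.replicate 10 19200 ++ List.replicate 5 18750 ++ List.replicate 30 16000 ++ List.replicate 40 15000 ++ List.replicate 10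 12800 ++ List.replicate 5 12500 ++ List.replicate 50 12000 ++ List.replicate 40 10000 ++ List.replicate 20 9600 ++ List.replicate 1 9375 ++ List.replicate 50 8000 ++ List.replicate 5 7680 ++ List.replicate 35 7500 ++ List.replicate 20 6400 ++ List.replicate 1 6250 ++ List.replicate 70 6000 ++ List.replicate 5 5120 ++ List.replicate 35 5000 ++ List.replicate 40 4800 ++ List.replicate 70 4000 ++ List.replicate 5 3840 ++ List.replicate 20 3750 ++ List.replicate 40 3200 ++ List.replicate 1 3072 ++ List.replicate 70 3000 ++ List.replicate 5 2560 ++ List.replicate 20 2500 ++ List.replicate 60 2400 ++ List.replicate 1 2048 ++ List.replicate 70 2000 ++ List.replicate 20 1920 ++ List.replicate 5 1875 ++ List.replicate 60 1600 ++ List.replicate 50 1500 ++ List.replicate 20 1280 ++ List.replicate 5 1250 ++ List.replicate 60 1200 ++ List.replicate 50 1000 ++ List.replicate 20 960 ++ List.replicate 60 800 ++ List.replicate 5 768 ++ List.replicate 30 750 ++ List.replicate 20 640 ++ List.replicate 60 600 ++ List.replicate 5 512 ++ List.replicate 30 500 ++ List.replicate 30 480 ++ List.replicate 60 400 ++ List.replicate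 10 375 ++ List.replicate 30 320 ++ List.replicate 40 300 ++ List.replicate 10 250 ++ List.replicate 30 240 ++ List.replicate 40 200 ++ List.replicate 10 192 ++ List.replicate 30 160 ++ List.replicate 20 150 ++ List.replicate 10 128 ++ List.replicate 20 120 ++ List.replicate 20 100 ++ List.replicate 20 80 ++ List.replicate 10 75 ++ List.replicate 20 60 ++ List.replicate 10 50 ++ List.replicate 10 48 ++ List.replicate 20 40 ++ List.replicate 10 32 ++ List.replicate 5 30 ++ List.replicate 5 20 ++ List.replicate 5 15 ++ List.replicate 5 12 ++ List.replicate 5 10 ++ List.replicate 5 8 ++ List.replicate 1 3 ++ List.replicate 1 2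

def VX1 : List ℕ := [32768, 8192, 2048, 512, 128, 32]

def VY1 : List ℕ := [100000, 50000, 40000, 25000, 20000, 16000, 12500, 10000, 8000, 6400, 6250, 5000, 4000, 3200, 3125, 2560, 2500, 2000, 1600, 1280, 1250, 1024, 1000, 800, 640, 625, 500, 400, 320, 256, 250, 200, 160, 125, 100, 80, 64, 50, 40, 25, 20, 16, 10, 5, 4, 1]

def VX2 : List ℕ := [98304, 65536, 24576, 16384, 6144, 4096, 1536, 1024, 384, 256, 96, 64]

def VY2 : List ℕ := [300000, 200000, 150000, 120000, 100000, 80000, 75000, 60000, 50000, 48000, 40000, 37500, 32000, 30000, 25000, 24000, 20000, 19200, 18750, 16000, 15000, 12800, 12500, 12000, 10000, 9600, 9375, 8000, 7680, 7500, 6400, 6250, 6000, 5120, 5000, 4800, 4000, 3840, 3750, 3200, 3072, 3000, 2560, 2500, 2400, 2048, 2000, 1920, 1875, 1600, 1500, 1280, 1250, 1200, 1000, 960, 800, 768, 750, 640, 600, 512, 500, 480, 400, 375, 320, 300, 250, 240, 200, 192, 160, 150, 128, 120, 100, 80, 75, 60, 50, 48, 40, 32, 30, 20, 15, 12, 10,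 8, 3, 2]

def LOX : List ℕ := [32768, 32768, 8192, 8192, 32768, 32768, 8192, 8192, 8192, 8192, 2048, 2048, 8192, 8192, 2048, 2048, 32768, 32768, 8192, 8192, 32768, 32768, 8192, 8192, 8192, 8192, 2048, 2048, 8192, 8192, 2048, 2048, 8192, 8192, 2048, 2048, 8192, 8192, 2048, 2048, 2048, 2048, 512, 512, 2048, 2048, 512, 512, 8192, 8192, 2048, 2048, 8192, 8192, 2048, 2048, 2048, 2048, 512, 512, 2048, 2048, 512, 512, 32768, 32768, 8192, 8192, 32768, 32768, 8192, 8192, 8192, 8192, 2048, 2048, 8192, 8192, 2048, 2048, 32768, 32768, 8192, 8192, 32768, 32768, 8192, 8192, 8192, 8192, 2048, 2048, 8192, 8192, 2048, 2048, 8192, 8192, 2048, 2048, 8192, 8192, 2048, 2048, 2048, 2048, 512, 512, 2048, 2048, 512, 512, 8192, 8192, 2048, 2048, 8192, 8192, 2048, 2048, 2048, 2048, 512, 512, 2048, 2048, 512, 512, 8192, 8192, 2048, 2048, 8192, 8192, 2048, 2048, 2048, 2048, 512, 512, 2048, 2048, 512, 512, 8192, 8192, 2048, 2048, 8192, 8192,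 2048, 2048, 2048, 2048, 512, 512, 2048, 2048, 512, 512, 2048, 2048, 512, 512, 2048, 2048, 512, 512, 512, 512, 128, 128, 512, 512, 128, 128, 2048, 2048, 512, 512, 2048, 2048, 512, 512, 512, 512, 128, 128, 512, 512, 128, 128, 8192, 8192, 2048, 2048, 8192, 8192, 2048, 2048, 2048, 2048, 512, 512, 2048, 2048, 512, 512, 8192, 8192, 2048, 2048, 8192, 8192, 2048, 2048, 2048, 2048, 512, 512, 2048, 2048, 512, 512, 2048, 2048, 512, 512, 2048, 2048, 512, 512, 512, 512, 128, 128, 512, 512, 128, 128, 2048, 2048, 512, 512, 2048, 2048, 512, 512, 512, 512, 128, 128, 512, 512, 128, 128, 32768, 32768, 8192, 8192, 32768, 32768, 8192, 8192, 8192, 8192, 2048, 2048, 8192, 8192, 2048, 2048, 32768, 32768, 8192, 8192, 32768, 32768, 8192, 8192, 8192, 8192, 2048, 2048, 8192, 8192, 2048, 2048, 8192, 8192, 2048, 2048, 8192, 8192, 2048, 2048, 2048, 2048, 512, 512, 2048, 2048, 512, 512, 8192, 8192, 2048, 2048, 8192, 8192, 2048, 2048, 2048, 2048, 512, 512, 2048,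 2048, 512, 512, 32768, 32768, 8192, 8192, 32768, 32768, 8192, 8192, 8192, 8192, 2048, 2048, 8192, 8192, 2048, 2048, 32768, 32768, 8192, 8192, 32768, 32768, 8192, 8192, 8192, 8192, 2048, 2048, 8192, 8192, 2048, 2048, 8192, 8192, 2048, 2048, 8192, 8192, 2048, 2048, 2048, 2048, 512, 512, 2048, 2048, 512, 512, 8192, 8192, 2048, 2048, 8192, 8192, 2048, 2048, 2048, 2048, 512, 512, 2048, 2048, 512, 512, 8192, 8192, 2048, 2048, 8192, 8192, 2048, 2048, 2048, 2048, 512, 512, 2048, 2048, 512, 512, 8192, 8192, 2048, 2048, 8192, 8192, 2048, 2048, 2048, 2048, 512, 512, 2048, 2048, 512, 512, 2048, 2048, 512, 512, 2048, 2048, 512, 512, 512, 512, 128, 128, 512, 512, 128, 128, 2048, 2048, 512, 512, 2048, 2048, 512, 512, 512, 512, 128, 128, 512, 512, 128, 128, 8192, 8192, 2048, 2048, 8192, 8192, 2048, 2048, 2048, 2048, 512, 512, 2048, 2048, 512, 512, 8192, 8192, 2048, 2048, 8192, 8192, 2048, 2048, 2048, 2048, 512, 512, 2048, 2048, 512, 512,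 2048, 2048, 512, 512, 2048, 2048, 512, 512, 512, 512, 128, 128, 512, 512, 128, 128, 2048, 2048, 512, 512, 2048, 2048, 512, 512, 512, 512, 128, 128, 512, 512, 128, 128, 8192, 8192, 2048, 2048, 8192, 8192, 2048, 2048, 2048, 2048, 512, 512, 2048, 2048, 512, 512, 8192, 8192, 2048, 2048, 8192, 8192, 2048, 2048, 2048, 2048, 512, 512, 2048, 2048, 512, 512, 2048, 2048, 512, 512, 2048, 2048, 512, 512, 512, 512, 128, 128, 512, 512, 128, 128, 2048, 2048, 512, 512, 2048, 2048, 512, 512, 512, 512, 128, 128, 512, 512, 128, 128, 8192, 8192, 2048, 2048, 8192, 8192, 2048, 2048, 2048, 2048, 512, 512, 2048, 2048, 512, 512, 8192, 8192, 2048, 2048, 8192, 8192, 2048, 2048, 2048, 2048, 512, 512, 2048, 2048, 512, 512, 2048, 2048, 512, 512, 2048, 2048, 512, 512, 512, 512, 128, 128, 512, 512, 128, 128, 2048, 2048, 512, 512, 2048, 2048, 512, 512, 512, 512, 128, 128, 512, 512, 128, 128, 2048, 2048, 512, 512, 2048, 2048, 512, 512, 512, 512, 128, 128, 512, 512, 128,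 128, 2048, 2048, 512, 512, 2048, 2048, 512, 512, 512, 512, 128, 128, 512, 512, 128, 128, 512, 512, 128, 128, 512, 512, 128, 128, 128, 128, 32, 32, 128, 128, 32, 32, 512, 512, 128, 128, 512, 512, 128, 128, 128, 128, 32, 32, 128, 128, 32, 32, 2048, 2048, 512, 512, 2048, 2048, 512, 512, 512, 512, 128, 128, 512, 512, 128, 128, 2048, 2048, 512, 512, 2048, 2048, 512, 512, 512, 512, 128, 128, 512, 512, 128, 128, 512, 512, 128, 128, 512, 512, 128, 128, 128, 128, 32, 32, 128, 128, 32, 32, 512, 512, 128, 128, 512, 512, 128, 128, 128, 128, 32, 32, 128, 128, 32, 32, 8192, 8192, 2048, 2048, 8192, 8192, 2048, 2048, 2048, 2048, 512, 512, 2048, 2048, 512, 512, 8192, 8192, 2048, 2048, 8192, 8192, 2048, 2048, 2048, 2048, 512, 512, 2048, 2048, 512, 512, 2048, 2048, 512, 512, 2048, 2048, 512, 512, 512, 512, 128, 128, 512, 512, 128, 128, 2048, 2048, 512, 512, 2048, 2048, 512, 512, 512, 512, 128, 128, 512, 512, 128, 128, 8192, 8192, 2048, 2048, 8192, 8192, 2048,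 2048, 2048, 2048, 512, 512, 2048, 2048, 512, 512, 8192, 8192, 2048, 2048, 8192, 8192, 2048, 2048, 2048, 2048, 512, 512, 2048, 2048, 512, 512, 2048, 2048, 512, 512, 2048, 2048, 512, 512, 512, 512, 128, 128, 512, 512, 128, 128, 2048, 2048, 512, 512, 2048, 2048, 512, 512, 512, 512, 128, 128, 512, 512, 128, 128, 2048, 2048, 512, 512, 2048, 2048, 512, 512, 512, 512, 128, 128, 512, 512, 128, 128, 2048, 2048, 512, 512, 2048, 2048, 512, 512, 512, 512, 128, 128, 512, 512, 128, 128, 512, 512, 128, 128, 512, 512, 128, 128, 128, 128, 32, 32, 128, 128, 32, 32, 512, 512, 128, 128, 512, 512, 128, 128, 128, 128, 32, 32, 128, 128, 32, 32, 2048, 2048, 512, 512, 2048, 2048, 512, 512, 512, 512, 128, 128, 512, 512, 128, 128, 2048, 2048, 512, 512, 2048, 2048, 512, 512, 512, 512, 128, 128, 512, 512, 128, 128, 512, 512, 128, 128, 512, 512, 128, 128, 128, 128, 32, 32, 128, 128, 32, 32, 512, 512, 128, 128, 512, 512, 128, 128, 128, 128, 32, 32, 128, 128, 32, 32]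

def LOY : List ℕ := [100000, 50000, 40000, 10000, 50000, 25000, 20000, 5000, 40000, 20000, 16000, 4000, 10000, 5000, 4000, 1000, 50000, 25000, 20000, 5000, 25000, 12500, 10000, 2500, 20000, 10000, 8000, 2000, 5000, 2500, 2000, 500, 40000, 20000, 16000, 4000, 20000, 10000, 8000, 2000, 16000, 8000, 6400, 1600, 4000, 2000, 1600, 400, 10000, 5000, 4000, 1000, 5000, 2500, 2000, 500, 4000, 2000, 1600, 400, 1000, 500, 400, 100, 50000, 25000, 20000, 5000, 25000, 12500, 10000, 2500, 20000, 10000, 8000, 2000, 5000, 2500, 2000, 500, 25000, 12500, 10000, 2500, 12500, 6250, 5000, 1250, 10000, 5000, 4000, 1000, 2500, 1250, 1000, 250, 20000, 10000, 8000, 2000, 10000, 5000, 4000, 1000, 8000, 4000, 3200, 800, 2000, 1000, 800, 200, 5000, 2500, 2000, 500, 2500, 1250, 1000, 250, 2000, 1000, 800, 200, 500, 250, 200, 50, 40000, 20000, 16000, 4000, 20000, 10000, 8000, 2000, 16000, 8000, 6400, 1600, 4000, 2000, 1600, 400, 20000, 10000, 8000, 2000, 10000, 5000, 4000, 1000, 8000,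 4000, 3200, 800, 2000, 1000, 800, 200, 16000, 8000, 6400, 1600, 8000, 4000, 3200, 800, 6400, 3200, 2560, 640, 1600, 800, 640, 160, 4000, 2000, 1600, 400, 2000, 1000, 800, 200, 1600, 800, 640, 160, 400, 200, 160, 40, 10000, 5000, 4000, 1000, 5000, 2500, 2000, 500, 4000, 2000, 1600, 400, 1000, 500, 400, 100, 5000, 2500, 2000, 500, 2500, 1250, 1000, 250, 2000, 1000, 800, 200, 500, 250, 200, 50, 4000, 2000, 1600, 400, 2000, 1000, 800, 200, 1600, 800, 640, 160, 400, 200, 160, 40, 1000, 500, 400, 100, 500, 250, 200, 50, 400, 200, 160, 40, 100, 50, 40, 10, 50000, 25000, 20000, 5000, 25000, 12500, 10000, 2500, 20000, 10000, 8000, 2000, 5000, 2500, 2000, 500, 25000, 12500, 10000, 2500, 12500, 6250, 5000, 1250, 10000, 5000, 4000, 1000, 2500, 1250, 1000, 250, 20000, 10000, 8000, 2000, 10000, 5000, 4000, 1000, 8000, 4000, 3200, 800, 2000, 1000, 800, 200, 5000, 2500, 2000, 500, 2500, 1250, 1000, 250, 2000, 1000, 800, 200, 500, 250, 200, 50, 25000,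 12500, 10000, 2500, 12500, 6250, 5000, 1250, 10000, 5000, 4000, 1000, 2500, 1250, 1000, 250, 12500, 6250, 5000, 1250, 6250, 3125, 2500, 625, 5000, 2500, 2000, 500, 1250, 625, 500, 125, 10000, 5000, 4000, 1000, 5000, 2500, 2000, 500, 4000, 2000, 1600, 400, 1000, 500, 400, 100, 2500, 1250, 1000, 250, 1250, 625, 500, 125, 1000, 500, 400, 100, 250, 125, 100, 25, 20000, 10000, 8000, 2000, 10000, 5000, 4000, 1000, 8000, 4000, 3200, 800, 2000, 1000, 800, 200, 10000, 5000, 4000, 1000, 5000, 2500, 2000, 500, 4000, 2000, 1600, 400, 1000, 500, 400, 100, 8000, 4000, 3200, 800, 4000, 2000, 1600, 400, 3200, 1600, 1280, 320, 800, 400, 320, 80, 2000, 1000, 800, 200, 1000, 500, 400, 100, 800, 400, 320, 80, 200, 100, 80, 20, 5000, 2500, 2000, 500, 2500, 1250, 1000, 250, 2000, 1000, 800, 200, 500, 250, 200, 50, 2500, 1250, 1000, 250, 1250, 625, 500, 125, 1000, 500, 400, 100, 250, 125, 100, 25, 2000, 1000, 800, 200, 1000, 500, 400, 100, 800, 400,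 320, 80, 200, 100, 80, 20, 500, 250, 200, 50, 250, 125, 100, 25, 200, 100, 80, 20, 50, 25, 20, 5, 40000, 20000, 16000, 4000, 20000, 10000, 8000, 2000, 16000, 8000, 6400, 1600, 4000, 2000, 1600, 400, 20000, 10000, 8000, 2000, 10000, 5000, 4000, 1000, 8000, 4000, 3200, 800, 2000, 1000, 800, 200, 16000, 8000, 6400, 1600, 8000, 4000, 3200, 800, 6400, 3200, 2560, 640, 1600, 800, 640, 160, 4000, 2000, 1600, 400, 2000, 1000, 800, 200, 1600, 800, 640, 160, 400, 200, 160, 40, 20000, 10000, 8000, 2000, 10000, 5000, 4000, 1000, 8000, 4000, 3200, 800, 2000, 1000, 800, 200, 10000, 5000, 4000, 1000, 5000, 2500, 2000, 500, 4000, 2000, 1600, 400, 1000, 500, 400, 100, 8000, 4000, 3200, 800, 4000, 2000, 1600, 400, 3200, 1600, 1280, 320, 800, 400, 320, 80, 2000, 1000, 800, 200, 1000, 500, 400, 100, 800, 400, 320, 80, 200, 100, 80, 20, 16000, 8000, 6400, 1600, 8000, 4000, 3200, 800, 6400, 3200, 2560, 640, 1600, 800, 640, 160, 8000, 4000, 3200,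 800, 4000, 2000, 1600, 400, 3200, 1600, 1280, 320, 800, 400, 320, 80, 6400, 3200, 2560, 640, 3200, 1600, 1280, 320, 2560, 1280, 1024, 256, 640, 320, 256, 64, 1600, 800, 640, 160, 800, 400, 320, 80, 640, 320, 256, 64, 160, 80, 64, 16, 4000, 2000, 1600, 400, 2000, 1000, 800, 200, 1600, 800, 640, 160, 400, 200, 160, 40, 2000, 1000, 800, 200, 1000, 500, 400, 100, 800, 400, 320, 80, 200, 100, 80, 20, 1600, 800, 640, 160, 800, 400, 320, 80, 640, 320, 256, 64, 160, 80, 64, 16, 400, 200, 160, 40, 200, 100, 80, 20, 160, 80, 64, 16, 40, 20, 16, 4, 10000, 5000, 4000, 1000, 5000, 2500, 2000, 500, 4000, 2000, 1600, 400, 1000, 500, 400, 100, 5000, 2500, 2000, 500, 2500, 1250, 1000, 250, 2000, 1000, 800, 200, 500, 250, 200, 50, 4000, 2000, 1600, 400, 2000, 1000, 800, 200, 1600, 800, 640, 160, 400, 200, 160, 40, 1000, 500, 400, 100, 500, 250, 200, 50, 400, 200, 160, 40, 100, 50, 40, 10, 5000, 2500, 2000, 500, 2500, 1250, 1000, 250,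 2000, 1000, 800, 200, 500, 250, 200, 50, 2500, 1250, 1000, 250, 1250, 625, 500, 125, 1000, 500, 400, 100, 250, 125, 100, 25, 2000, 1000, 800, 200, 1000, 500, 400, 100, 800, 400, 320, 80, 200, 100, 80, 20, 500, 250, 200, 50, 250, 125, 100, 25, 200, 100, 80, 20, 50, 25, 20, 5, 4000, 2000, 1600, 400, 2000, 1000, 800, 200, 1600, 800, 640, 160, 400, 200, 160, 40, 2000, 1000, 800, 200, 1000, 500, 400, 100, 800, 400, 320, 80, 200, 100, 80, 20, 1600, 800, 640, 160, 800, 400, 320, 80, 640, 320, 256, 64, 160, 80, 64, 16, 400, 200, 160, 40, 200, 100, 80, 20, 160, 80, 64, 16, 40, 20, 16, 4, 1000, 500, 400, 100, 500, 250, 200, 50, 400, 200, 160, 40, 100, 50, 40, 10, 500, 250, 200, 50, 250, 125, 100, 25, 200, 100, 80, 20, 50, 25, 20, 5, 400, 200, 160, 40, 200, 100, 80, 20, 160, 80, 64, 16, 40, 20, 16, 4, 100, 50, 40, 10, 50, 25, 20, 5, 40, 20, 16, 4, 10, 5, 4, 1]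

/-! ### Auxiliary general lemmas -/

section Aux

open List Multiset

theorem exists_le_map {α β : Type*} (f : α → β) (s : Multiset β) (t : Multiset α) :
    s ≤ Multiset.map f t → ∃ u, u ≤ t ∧ u.map f = s :=
  Quotient.inductionOn₂ s t fun ls lt h => by
    have h' : (ls : Multiset β) ≤ Multiset.map f (lt : Multiset α) := h
    rw [Multiset.map_coe] at h'
    obtain ⟨l, hp, hsub⟩ := Multiset.coe_le.mp h'
    obtain ⟨l', hsub', rfl⟩ := List.sublist_map_iff.mp hsub
    exact ⟨↑l', Multiset.coe_le.mpr hsub'.subperm,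
      by rw [Multiset.map_coe]; exact Multiset.coe_eq_coe.mpr hp⟩

theorem lsum_map_sub (L : List ℝ) (t : ℝ) :
    (L.map (fun a => a - t)).sum = L.sum - L.length * t := by
  induction L with
  | nil => simp
  | cons a L ih => simp [ih]; ring

theorem msum_map_sub (s : Multiset ℝ) (t : ℝ) :
    (s.map (fun a => a - t)).sum = s.sum - (Multiset.card s) * t := by
  induction s using Multiset.induction_on with
  | empty => simp
  | cons a s ih =>
    simp only [Multiset.map_cons, Multiset.sum_cons, Multiset.card_cons, ih]
    push_cast
    ring

/-- Master lemma: `topSum` equals the sum of the first `l` entries of a sorted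
(descending) enumeration of the entries. -/
theorem topSum_eq_take {ι : Type*} [Fintype ι] (x : ι → ℝ) (L : List ℝ)
    (hL : (L : Multiset ℝ) = Finset.univ.val.map x)
    (hsort : L.Pairwise (· ≥ ·))
    {l : ℕ} (hl1 : 1 ≤ l) (hl2 : l ≤ Fintype.card ι) :
    topSum x l = (L.take l).sum := by
  have hlen : L.length = Fintype.card ι := by
    have := congrArg Multiset.card hL
    simpa [Finset.card_univ] using this
  have hlL : l ≤ L.length := hlen ▸ hl2
  have hidx : l - 1 < L.length := by omega
  set t : ℝ := L[l - 1] with ht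
  have hget := List.pairwise_iff_getElem.mp hsort
  -- entries in the prefix are ≥ t
  have htake : ∀ a ∈ L.take l, t ≤ a := by
    intro a ha
    obtain ⟨i, hi, rfl⟩ := List.mem_take_iff_getElem.mp ha
    have hi' : i < l := lt_of_lt_of_le hi (min_le_left _ _)
    rcases eq_or_lt_of_le (Nat.le_sub_one_of_lt hi') with h | h
    · subst h; exact le_of_eq rfl
    · exact hget i (l - 1) (by omega) hidx h
  -- entries after the prefix are ≤ t
  have hdrop : ∀ a ∈ L.drop l, a ≤ t := by
    intro a ha
    obtain ⟨i, hi, rfl⟩ := List.mem_iff_getElem.mp ha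
    have hi' : i < L.length - l := by simpa using hi
    rw [List.getElem_drop]
    exact hget (l - 1) (l + i) hidx (by omega) (by omega)
  have hlentake : (L.take l).length = l := by
    rw [List.length_take]; omega
  -- key identity for the positive-part sum
  have key1 : (L.map (fun a => max (a - t) 0)).sum = (L.take l).sum - l * t := by
    conv_lhs => rw [← List.take_append_drop l L]
    rw [List.map_append, List.sum_append]
    have e1 : (L.take l).map (fun a => max (a - t) 0)
        = (L.take l).map (fun a => a - t) := by
      refine List.map_congr_left fun a ha => ?_
      exact max_eq_left (by linarith [htake a ha])
    have e2 : (L.drop l).map (fun a => max (a - t) 0)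
        = (L.drop l).map (fun _ => (0 : ℝ)) := by
      refine List.map_congr_left fun a ha => ?_
      exact max_eq_right (by linarith [hdrop a ha])
    rw [e1, e2, lsum_map_sub, hlentake]
    simp
  -- upper bound for sums over arbitrary sub-multisets of cardinality l
  have key2 : ∀ s : Multiset ℝ, s ≤ (L : Multiset ℝ) → Multiset.card s = l →
      s.sum ≤ (L.take l).sum := by
    intro s hs hc
    have h1 : s.sum = (s.map (fun a => a - t)).sum + l * t := by
      rw [msum_map_sub, hc]; ring
    have h2 : (s.map (fun a => a - t)).sum ≤ (s.map (fun a => max (a - t) 0)).sum :=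
      Multiset.sum_map_le_sum_map _ _ (fun i _ => le_max_left _ _)
    have h3 : (s.map (fun a => max (a - t) 0)).sum
        ≤ ((L : Multiset ℝ).map (fun a => max (a - t) 0)).sum := by
      obtain ⟨u, hu⟩ := Multiset.le_iff_exists_add.mp hs
      rw [hu, Multiset.map_add, Multiset.sum_add]
      have : (0:ℝ) ≤ (u.map (fun a => max (a - t) 0)).sum :=
        Multiset.sum_nonneg (by
          intro a ha
          obtain ⟨b, _, rfl⟩ := Multiset.mem_map.mp ha
          exact le_max_right _ _)
      linarith
    have h4 : ((L : Multiset ℝ).map (fun a => max (a - t) 0)).sum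
        = (L.map (fun a => max (a - t) 0)).sum := by
      rw [Multiset.map_coe, Multiset.sum_coe]
    calc s.sum = (s.map (fun a => a - t)).sum + l * t := h1
      _ ≤ (s.map (fun a => max (a - t) 0)).sum + l * t := by linarith
      _ ≤ (L.map (fun a => max (a - t) 0)).sum + l * t := by rw [← h4]; linarith
      _ = (L.take l).sum := by rw [key1]; ring
  -- the witness subset realizing the prefix sum
  have hwit : ∃ A : Finset ι, A.card = l ∧ ∑ i ∈ A, x i = (L.take l).sum := by
    have hsub : ((L.take l : List ℝ) : Multiset ℝ) ≤ (L : Multiset ℝ) :=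
      Multiset.coe_le.mpr (List.take_sublist l L).subperm
    rw [hL] at hsub
    obtain ⟨u, hu, hmap⟩ := exists_le_map x _ _ hsub
    refine ⟨⟨u, Multiset.nodup_of_le hu Finset.univ.nodup⟩, ?_, ?_⟩
    · have : Multiset.card (u.map x) = Multiset.card ((L.take l : List ℝ) : Multiset ℝ) := by
        rw [hmap]
      simpa [Finset.card_def, hlentake] using this
    · rw [Finset.sum_eq_multiset_sum]
      show (u.map x).sum = _
      rw [hmap, Multiset.sum_coe]
  obtain ⟨A₀, hA₀c, hA₀s⟩ := hwit
  have hmem : (L.take l).sum ∈ {s : ℝ | ∃ A : Finset ι, A.card = l ∧ s = ∑ i ∈ A, x i} :=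
    ⟨A₀, hA₀c, hA₀s.symm⟩
  have hbdd : BddAbove {s : ℝ | ∃ A : Finset ι, A.card = l ∧ s = ∑ i ∈ A, x i} := by
    refine Set.Finite.bddAbove (Set.Finite.subset (Set.finite_range
      (fun A : Finset ι => ∑ i ∈ A, x i)) ?_)
    rintro b ⟨A, _, rfl⟩
    exact ⟨A, rfl⟩
  refine le_antisymm ?_ ?_
  · refine csSup_le ⟨_, hmem⟩ ?_
    rintro b ⟨A, hA, rfl⟩
    have h1 : (A.val.map x) ≤ (L : Multiset ℝ) := by
      rw [hL]
      exact Multiset.map_le_map (Finset.val_le_iff.mpr (Finset.subset_univ A))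
    have h2 : Multiset.card (A.val.map x) = l := by
      rw [Multiset.card_map, ← Finset.card_def, hA]
    rw [Finset.sum_eq_multiset_sum]
    exact key2 _ h1 h2
  · exact le_csSup hbdd hmem

/-- Boolean check that a list of naturals is nonincreasing. -/
def sortb : List ℕ → Bool
  | [] => true
  | [_] => true
  | a :: b :: t => (b ≤ a) && sortb (b :: t)

theorem sortb_chain' : ∀ {L : List ℕ}, sortb L = true → List.Chain' (· ≥ ·) L := by
  intro L
  induction L with
  | nil => intro _; exact List.isChain_nil
  | cons a t ih =>
    cases t with
    | nil => intro _; exact List.isChain_singleton a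
    | cons b t =>
      intro h
      rw [sortb, Bool.and_eq_true, decide_eq_true_eq] at h
      exact List.isChain_cons_cons.mpr ⟨h.1, ih h.2⟩

/-- Version for rational data given by natural numerators over a common denominator. -/
theorem topSum_eq_nat {ι : Type*} [Fintype ι] (x : ι → ℝ) (n : ι → ℕ) (D : ℕ)
    (hD : 0 < D) (hx : ∀ i, x i = (n i : ℝ) / (D : ℝ))
    (Ln : List ℕ) (hperm : (Ln : Multiset ℕ) = Finset.univ.val.map n)
    (hsort : sortb Ln = true)
    {l : ℕ} (hl1 : 1 ≤ l) (hl2 : l ≤ Fintype.card ι) :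
    topSum x l = ((Ln.take l).sum : ℝ) / (D : ℝ) := by
  have hD' : (0:ℝ) < (D:ℝ) := by exact_mod_cast hD
  set g : ℕ → ℝ := fun k => (k : ℝ) / (D : ℝ) with hg
  have hmono : ∀ a b : ℕ, a ≥ b → g a ≥ g b := by
    intro a b hab
    exact (div_le_div_iff_of_pos_right hD').mpr (by exact_mod_cast hab)
  have hL : ((Ln.map g : List ℝ) : Multiset ℝ) = Finset.univ.val.map x := by
    rw [← Multiset.map_coe, hperm, Multiset.map_map]
    exact Multiset.map_congr rfl (fun i _ => (hx i).symm)
  have hsort' : (Ln.map g).Pairwise (· ≥ ·) :=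
    (List.isChain_iff_pairwise.mp (sortb_chain' hsort)).map g hmono
  rw [topSum_eq_take x (Ln.map g) hL hsort' hl1 hl2]
  rw [← List.map_take]
  have : ∀ M : List ℕ, (M.map g).sum = (M.sum : ℝ) / (D : ℝ) := by
    intro M
    induction M with
    | nil => simp
    | cons a M ih => simp [ih]; push_cast; ring
  exact this _

/-- Prefix-sum comparison checker. -/
def chk : ℕ → ℕ → List ℕ → List ℕ → Bool
  | _, _, [], [] => true
  | ax, ay, x :: xs, y :: ys => (ax + x ≤ ay + y) && chk (ax + x) (ay + y) xs ys
  | _, _, _, _ => false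

theorem chk_spec : ∀ (xs ys : List ℕ) (ax ay : ℕ), ax ≤ ay → chk ax ay xs ys = true →
    ∀ l : ℕ, ax + (xs.take l).sum ≤ ay + (ys.take l).sum := by
  intro xs
  induction xs with
  | nil =>
    intro ys ax ay hle h l
    cases ys with
    | nil => simpa using hle
    | cons y ys => simp [chk] at h
  | cons x xs ih =>
    intro ys ax ay hle h l
    cases ys with
    | nil => simp [chk] at h
    | cons y ys =>
      rw [chk, Bool.and_eq_true, decide_eq_true_eq] at h
      obtain ⟨h1, h2⟩ := h
      cases l with
      | zero => simpa using hle
      | succ l =>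
        have := ih ys (ax + x) (ay + y) h1 h2 l
        simp only [List.take_succ_cons, List.sum_cons]
        omega

/-- Count-based permutation checker. -/
def ccheck (V L1 L2 : List ℕ) : Bool :=
  L1.all (· ∈ V) && L2.all (· ∈ V) && V.all (fun v => L1.count v == L2.count v)

theorem ccheck_perm {V L1 L2 : List ℕ} (h : ccheck V L1 L2 = true) :
    (L1 : Multiset ℕ) = (L2 : Multiset ℕ) := by
  rw [ccheck, Bool.and_eq_true, Bool.and_eq_true] at h
  obtain ⟨⟨h1, h2⟩, h3⟩ := h
  rw [List.all_eq_true] at h1 h2 h3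
  refine Multiset.coe_eq_coe.mpr (List.perm_iff_count.mpr fun a => ?_)
  by_cases ha : a ∈ V
  · exact Nat.beq_eq_true_eq _ _ |>.mp (h3 a ha)
  · rw [List.count_eq_zero.mpr (fun hm => ha (by simpa using h1 a hm)),
      List.count_eq_zero.mpr (fun hm => ha (by simpa using h2 a hm))]

/-- Entries multiset of a function on `ι × Fin 2` splits into the two slices. -/
theorem univ_val_map_prod_fin2 {ι : Type*} [Fintype ι] (n : ι × Fin 2 → ℕ) :
    (Finset.univ.val.map n : Multiset ℕ)
      = Finset.univ.val.map (fun i => n (i, 0)) + Finset.univ.val.map (fun i => n (i, 1)) := by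
  have h2 : (Finset.univ : Finset (Fin 2)).val = (0 : Fin 2) ::ₘ (1 : Fin 2) ::ₘ 0 := by
    decide
  rw [← Finset.univ_product_univ, Finset.product_val, h2]
  rw [Multiset.product_cons, Multiset.product_cons, Multiset.product_zero, add_zero,
    Multiset.map_add, Multiset.map_map, Multiset.map_map]
  rfl

end Aux

/-! ### Concrete data -/

def npsi : Fin 4 → ℕ := ![4, 4, 1, 1]
def nphi : Fin 4 → ℕ := ![10, 5, 4, 1]
def cfac : Fin 2 → ℕ := ![3, 2]

def nx1 : (Fin 5 → Fin 4) → ℕ := fun f => (∏ j, npsi (f j)) * 32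
def ny1 : (Fin 5 → Fin 4) → ℕ := fun f => ∏ j, nphi (f j)
def nx2 : (Fin 5 → Fin 4) × Fin 2 → ℕ := fun p => nx1 p.1 * cfac p.2
def ny2 : (Fin 5 → Fin 4) × Fin 2 → ℕ := fun p => ny1 p.1 * cfac p.2

theorem card1 : Fintype.card (Fin 5 → Fin 4) = 1024 := by
  simp [Fintype.card_fun]

theorem card2 : Fintype.card ((Fin 5 → Fin 4) × Fin 2) = 2048 := by
  rw [Fintype.card_prod, card1, Fintype.card_fin]

/-! ### Cast identities -/

theorem psi_cast (i : Fin 4) : (![0.4, 0.4, 0.1, 0.1] : Fin 4 → ℝ) i = (npsi i : ℝ) / 10 := by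
  fin_cases i <;> norm_num [npsi]

theorem phi_cast (i : Fin 4) : (![0.5, 0.25, 0.2, 0.05] : Fin 4 → ℝ) i = (nphi i : ℝ) / 20 := by
  fin_cases i <;> norm_num [nphi]

theorem c_cast (b : Fin 2) : (![0.6, 0.4] : Fin 2 → ℝ) b = (cfac b : ℝ) / 5 := by
  fin_cases b <;> norm_num [cfac]

theorem pow_cast {d : ℝ} (v : Fin 4 → ℝ) (n : Fin 4 → ℕ)
    (hv : ∀ i, v i = (n i : ℝ) / d) (f : Fin 5 → Fin 4) :
    tensorPow v 5 f = ((∏ j, n (f j) : ℕ) : ℝ) / d ^ 5 := by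
  unfold tensorPow
  rw [Finset.prod_congr rfl fun j _ => hv (f j), Finset.prod_div_distrib,
    Finset.prod_const]
  push_cast
  simp [Finset.card_univ]

theorem x1_cast (f : Fin 5 → Fin 4) :
    tensorPow (![0.4, 0.4, 0.1, 0.1] : Fin 4 → ℝ) 5 f = (nx1 f : ℝ) / 3200000 := by
  rw [pow_cast _ npsi psi_cast f]
  unfold nx1
  push_cast
  rw [div_eq_div_iff (by norm_num) (by norm_num)]
  ring

theorem y1_cast (f : Fin 5 → Fin 4) :
    tensorPow (![0.5, 0.25, 0.2, 0.05] : Fin 4 → ℝ) 5 f = (ny1 f : ℝ) / 3200000 := by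
  rw [pow_cast _ nphi phi_cast f]
  unfold ny1
  norm_num

set_option linter.unusedTactic false in
theorem x2_cast (p : (Fin 5 → Fin 4) × Fin 2) :
    tensor (tensorPow (![0.4, 0.4, 0.1, 0.1] : Fin 4 → ℝ) 5) (![0.6, 0.4] : Fin 2 → ℝ) p
      = (nx2 p : ℝ) / 16000000 := by
  unfold tensor nx2
  rw [x1_cast, c_cast]
  push_cast
  ring

theorem y2_cast (p : (Fin 5 → Fin 4) × Fin 2) :
    tensor (tensorPow (![0.5, 0.25, 0.2, 0.05] : Fin 4 → ℝ) 5) (![0.6, 0.4] : Fin 2 → ℝ) p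
      = (ny2 p : ℝ) / 16000000 := by
  unfold tensor ny2
  rw [y1_cast, c_cast]
  push_cast
  ring

/-! ### Kernel computations -/

set_option maxRecDepth 4000000 in
set_option maxHeartbeats 4000000 in
theorem hLOX : (LOX : Multiset ℕ) = Finset.univ.val.map nx1 := by decide

set_option maxRecDepth 4000000 in
set_option maxHeartbeats 4000000 in
theorem hLOY : (LOY : Multiset ℕ) = Finset.univ.val.map ny1 := by decide

set_option maxRecDepth 4000000 in
set_option maxHeartbeats 4000000 in
theorem hX1 : (LX1 : Multiset ℕ) = Finset.univ.val.map nx1 := by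
  rw [← hLOX]
  exact ccheck_perm (V := VX1) (by decide)

set_option maxRecDepth 4000000 in
set_option maxHeartbeats 4000000 in
theorem hY1 : (LY1 : Multiset ℕ) = Finset.univ.val.map ny1 := by
  rw [← hLOY]
  exact ccheck_perm (V := VY1) (by decide)

set_option maxRecDepth 4000000 in
set_option maxHeartbeats 4000000 in
theorem hX2 : (LX2 : Multiset ℕ) = Finset.univ.val.map nx2 := by
  rw [univ_val_map_prod_fin2]
  have h0 : (fun i : Fin 5 → Fin 4 => nx2 (i, 0)) = (fun k => k * 3) ∘ nx1 := rfl
  have h1 : (fun i : Fin 5 → Fin 4 => nx2 (i, 1)) = (fun k => k * 2) ∘ nx1 := rfl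
  rw [h0, h1, ← Multiset.map_map (fun k => k * 3) nx1, ← Multiset.map_map (fun k => k * 2) nx1,
    ← hLOX, Multiset.map_coe, Multiset.map_coe, Multiset.coe_add]
  exact ccheck_perm (V := VX2) (by decide)

set_option maxRecDepth 4000000 in
set_option maxHeartbeats 4000000 in
theorem hY2 : (LY2 : Multiset ℕ) = Finset.univ.val.map ny2 := by
  rw [univ_val_map_prod_fin2]
  have h0 : (fun i : Fin 5 → Fin 4 => ny2 (i, 0)) = (fun k => k * 3) ∘ ny1 := rfl
  have h1 : (fun i : Fin 5 → Fin 4 => ny2 (i, 1)) = (fun k => k * 2) ∘ ny1 := rfl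
  rw [h0, h1, ← Multiset.map_map (fun k => k * 3) ny1, ← Multiset.map_map (fun k => k * 2) ny1,
    ← hLOY, Multiset.map_coe, Multiset.map_coe, Multiset.coe_add]
  exact ccheck_perm (V := VY2) (by decide)

set_option maxRecDepth 4000000 in
set_option maxHeartbeats 4000000 in
theorem sortX1 : sortb LX1 = true := by decide

set_option maxRecDepth 4000000 in
set_option maxHeartbeats 4000000 in
theorem sortY1 : sortb LY1 = true := by decide

set_option maxRecDepth 4000000 in
set_option maxHeartbeats 4000000 in
theorem sortX2 : sortb LX2 = true := by decide

set_option maxRecDepth 4000000 in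
set_option maxHeartbeats 4000000 in
theorem sortY2 : sortb LY2 = true := by decide

set_option maxRecDepth 4000000 in
set_option maxHeartbeats 4000000 in
theorem chk22 : chk 0 0 LX2 LY2 = true := by decide

set_option maxRecDepth 4000000 in
set_option maxHeartbeats 4000000 in
theorem sum30X : (LX1.take 30).sum = 983040 := by decide

set_option maxRecDepth 4000000 in
set_option maxHeartbeats 4000000 in
theorem sum30Y : (LY1.take 30).sum = 980000 := by decide

/-! ### Main theorem -/

theorem stmt_17 :
    ¬ Majorized (tensorPow (![0.4, 0.4, 0.1, 0.1] : Fin 4 → ℝ) 5)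
      (tensorPow (![0.5, 0.25, 0.2, 0.05] : Fin 4 → ℝ) 5) ∧
    Majorized
      (tensor (tensorPow (![0.4, 0.4, 0.1, 0.1] : Fin 4 → ℝ) 5)
        (![0.6, 0.4] : Fin 2 → ℝ))
      (tensor (tensorPow (![0.5, 0.25, 0.2, 0.05] : Fin 4 → ℝ) 5)
        (![0.6, 0.4] : Fin 2 → ℝ)) := by
  constructor
  · intro h
    have h30 := h 30 (by norm_num) (by rw [card1]; norm_num)
    rw [topSum_eq_nat _ nx1 3200000 (by norm_num) x1_cast LX1 hX1 sortX1
        (by norm_num) (by rw [card1]; norm_num),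
      topSum_eq_nat _ ny1 3200000 (by norm_num) y1_cast LY1 hY1 sortY1
        (by norm_num) (by rw [card1]; norm_num),
      sum30X, sum30Y] at h30
    norm_num at h30
  · intro l hl1 hl2
    rw [card2] at hl2
    rw [topSum_eq_nat _ nx2 16000000 (by norm_num) x2_cast LX2 hX2 sortX2
        hl1 (by rw [card2]; exact hl2),
      topSum_eq_nat _ ny2 16000000 (by norm_num) y2_cast LY2 hY2 sortY2
        hl1 (by rw [card2]; exact hl2)]
    have hnat : (LX2.take l).sum ≤ (LY2.take l).sum := by
      have := chk_spec LX2 LY2 0 0 le_rfl chk22 l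
      simpa using this
    have : ((LX2.take l).sum : ℝ) ≤ ((LY2.take l).sum : ℝ) := by exact_mod_cast hnat
    exact (div_le_div_iff_of_pos_right (by norm_num)).mpr this
end

section
/- (Example 3) Let ψ' = (0.4/1.01, 0.4/1.01, 0.1/1.01, 0.1/1.01, 0.01/1.01), φ' = (0.5/1.01, 0.25/1.01, 0.2/1.01, 0.05/1.01, 0.01/1.01) and c = (0.7, 0.3). Then for every integer q ≥ 1, ψ'⊗c^{⊗q} is not majorized by φ'⊗c^{⊗q}; that is, c is not a multiple-copy catalyst for the transformation of ψ' to φ', so no number of copies of c suffices to catalyze this single-copy transformation. -/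
/-!
Compare the sums of the two largest entries. The factor `c^{⊗q}` is maximised only at the
constant index `fun _ => 0`, with value `0.7^q`; any other index loses at least a factor
`0.3/0.7`. Hence the two largest entries of `ψ'⊗c^{⊗q}` are `0.4/1.01 · 0.7^q` twice, while
in `φ'⊗c^{⊗q}` the largest is `0.5/1.01 · 0.7^q` and every other entry is at most
`max (0.25, 0.5 · 0.3/0.7)/1.01 · 0.7^q = 0.25/1.01 · 0.7^q`. So `S₂` is at least
`0.8/1.01 · 0.7^q` on the left and at most `0.75/1.01 · 0.7^q` on the right.
-/

open Finset

section TopSum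

variable {ι : Type*} [Fintype ι]

lemma bddAbove_subsetSums (x : ι → ℝ) (l : ℕ) :
    BddAbove {s : ℝ | ∃ A : Finset ι, A.card = l ∧ s = ∑ i ∈ A, x i} :=
  ((Set.finite_range fun A : Finset ι => ∑ i ∈ A, x i).subset
    (by rintro s ⟨A, -, rfl⟩; exact ⟨A, rfl⟩)).bddAbove

lemma sum_le_topSum (x : ι → ℝ) (A : Finset ι) : ∑ i ∈ A, x i ≤ topSum x #A :=
  le_csSup (bddAbove_subsetSums x _) ⟨A, rfl, rfl⟩

lemma topSum_le_of_forall {x : ι → ℝ} {l : ℕ} {B : ℝ} (hl : l ≤ Fintype.card ι)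
    (h : ∀ A : Finset ι, #A = l → ∑ i ∈ A, x i ≤ B) : topSum x l ≤ B := by
  obtain ⟨A, -, hA⟩ := exists_subset_card_eq (s := (univ : Finset ι)) (n := l) (by rwa [card_univ])
  exact csSup_le ⟨_, A, hA, rfl⟩ (by rintro s ⟨A, hA, rfl⟩; exact h A hA)

lemma topSum_two_le {x : ι → ℝ} (i₀ : ι) {M m : ℝ} (h2 : 2 ≤ Fintype.card ι)
    (hM : ∀ i, x i ≤ M) (hm : ∀ i, i ≠ i₀ → x i ≤ m) : topSum x 2 ≤ M + m := by
  classical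
  refine topSum_le_of_forall h2 fun A hA => ?_
  obtain ⟨a, b, hab, rfl⟩ := card_eq_two.mp hA
  rw [sum_pair hab]
  by_cases ha : a = i₀
  · linarith [hM a, hm b (ha ▸ hab.symm)]
  · linarith [hm a ha, hM b]

lemma not_majorized_of_topSum_lt {x y : ι → ℝ} {l : ℕ} (hl : 1 ≤ l)
    (hlN : l ≤ Fintype.card ι) (h : topSum y l < topSum x l) : ¬ Majorized x y :=
  fun hxy => (hxy l hl hlN).not_gt h

end TopSum

section TensorPow

variable {ι : Type*} {c : ι → ℝ} {a : ℝ}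

lemma tensorPow_const (c : ι → ℝ) (q : ℕ) (i : ι) : tensorPow c q (fun _ => i) = c i ^ q := by
  simp [tensorPow]

lemma tensorPow_nonneg (h0 : ∀ i, 0 ≤ c i) {q : ℕ} (f : Fin q → ι) : 0 ≤ tensorPow c q f :=
  prod_nonneg fun j _ => h0 (f j)

lemma prod_le_pow_card_of_le (h0 : ∀ i, 0 ≤ c i) (ha : ∀ i, c i ≤ a) {q : ℕ}
    (s : Finset (Fin q)) (f : Fin q → ι) : ∏ j ∈ s, c (f j) ≤ a ^ #s := by
  simpa using prod_le_prod (fun j _ => h0 (f j)) (fun j _ => ha (f j)) (s := s)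

lemma tensorPow_le_pow (h0 : ∀ i, 0 ≤ c i) (ha : ∀ i, c i ≤ a) {q : ℕ} (f : Fin q → ι) :
    tensorPow c q f ≤ a ^ q := by
  simpa [tensorPow] using prod_le_pow_card_of_le h0 ha univ f

/-- Multiplied through by `a` to avoid the truncated exponent `q - 1`. -/
lemma mul_tensorPow_le (h0 : ∀ i, 0 ≤ c i) (ha : ∀ i, c i ≤ a) {q : ℕ} {f : Fin q → ι}
    (j₀ : Fin q) {b : ℝ} (hb : c (f j₀) ≤ b) : a * tensorPow c q f ≤ b * a ^ q := by
  have hrest := prod_le_pow_card_of_le h0 ha (univ.erase j₀) f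
  have ha0 : 0 ≤ a := (h0 (f j₀)).trans (ha (f j₀))
  have hq : a ^ q = a * a ^ #(univ.erase j₀) := by
    rw [← pow_succ', card_erase_add_one (mem_univ j₀), card_univ, Fintype.card_fin]
  calc a * tensorPow c q f = c (f j₀) * (a * ∏ j ∈ univ.erase j₀, c (f j)) := by
        rw [tensorPow, ← mul_prod_erase univ _ (mem_univ j₀)]; ring
    _ ≤ b * (a * a ^ #(univ.erase j₀)) := by
        gcongr
        · exact mul_nonneg ha0 (prod_nonneg fun j _ => h0 (f j))
        · exact (h0 _).trans hb
    _ = b * a ^ q := by rw [hq]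

end TensorPow

noncomputable section Example3

def ψ' : Fin 5 → ℝ := ![0.4 / 1.01, 0.4 / 1.01, 0.1 / 1.01, 0.1 / 1.01, 0.01 / 1.01]

def φ' : Fin 5 → ℝ := ![0.5 / 1.01, 0.25 / 1.01, 0.2 / 1.01, 0.05 / 1.01, 0.01 / 1.01]

def catalyst : Fin 2 → ℝ := ![0.7, 0.3]

lemma catalyst_nonneg (i : Fin 2) : 0 ≤ catalyst i := by
  fin_cases i <;> norm_num [catalyst]

lemma catalyst_le (i : Fin 2) : catalyst i ≤ 0.7 := by
  fin_cases i <;> norm_num [catalyst]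

lemma φ'_le (i : Fin 5) : φ' i ≤ 0.5 / 1.01 := by
  fin_cases i <;> norm_num [φ']

lemma φ'_le_of_ne_zero {i : Fin 5} (hi : i ≠ 0) : φ' i ≤ 0.25 / 1.01 := by
  fin_cases i
  · exact absurd rfl hi
  all_goals norm_num [φ']

lemma two_le_card_prod (q : ℕ) : 2 ≤ Fintype.card (Fin 5 × (Fin q → Fin 2)) := by
  simp only [Fintype.card_prod, Fintype.card_fun, Fintype.card_fin]
  linarith [Nat.one_le_two_pow (n := q)]

lemma tensor_φ'_le {q : ℕ} (p : Fin 5 × (Fin q → Fin 2)) :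
    tensor φ' (tensorPow catalyst q) p ≤ 0.5 / 1.01 * 0.7 ^ q :=
  mul_le_mul (φ'_le p.1) (tensorPow_le_pow catalyst_nonneg catalyst_le _)
    (tensorPow_nonneg catalyst_nonneg _) (by norm_num)

/-- Off the top index, either the `φ'`-factor drops to `0.25` or the catalyst factor loses
`0.3/0.7`, and `0.5 · 0.3/0.7 < 0.25`. -/
lemma tensor_φ'_le_of_ne {q : ℕ} {p : Fin 5 × (Fin q → Fin 2)} (hp : p ≠ (0, fun _ => 0)) :
    tensor φ' (tensorPow catalyst q) p ≤ 0.25 / 1.01 * 0.7 ^ q := by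
  obtain ⟨i, f⟩ := p
  have hT := tensorPow_nonneg catalyst_nonneg f
  by_cases hi : i = 0
  · obtain ⟨j₀, hj₀⟩ : ∃ j₀, f j₀ ≠ 0 := by
      by_contra! hf
      exact hp (by rw [hi, funext hf])
    have hf : f j₀ = 1 := by omega
    have h := mul_tensorPow_le catalyst_nonneg catalyst_le (f := f) j₀ (b := 0.3)
      (by rw [hf]; norm_num [catalyst])
    have hpow : (0 : ℝ) < 0.7 ^ q := by positivity
    simp only [tensor, hi, φ']
    norm_num at h ⊢
    linarith
  · exact mul_le_mul (φ'_le_of_ne_zero hi) (tensorPow_le_pow catalyst_nonneg catalyst_le _) hT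
      (by norm_num)

lemma topSum_tensor_φ'_two_le (q : ℕ) :
    topSum (tensor φ' (tensorPow catalyst q)) 2 ≤ 0.75 / 1.01 * 0.7 ^ q := by
  have h := topSum_two_le (0, fun _ => 0) (two_le_card_prod q) tensor_φ'_le
    fun _ => tensor_φ'_le_of_ne
  linarith

lemma le_topSum_tensor_ψ'_two (q : ℕ) :
    0.8 / 1.01 * 0.7 ^ q ≤ topSum (tensor ψ' (tensorPow catalyst q)) 2 := by
  have hne : ((0, fun _ => 0) : Fin 5 × (Fin q → Fin 2)) ≠ (1, fun _ => 0) := by simp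
  have h := sum_le_topSum (tensor ψ' (tensorPow catalyst q)) {(0, fun _ => 0), (1, fun _ => 0)}
  rw [card_pair hne, sum_pair hne] at h
  simp only [tensor, tensorPow_const] at h
  norm_num [ψ', catalyst] at h ⊢
  linarith

end Example3

theorem stmt_19 :
    ∀ q : ℕ, 1 ≤ q →
      ¬ Majorized
        (tensor (![0.4 / 1.01, 0.4 / 1.01, 0.1 / 1.01, 0.1 / 1.01, 0.01 / 1.01] : Fin 5 → ℝ)
          (tensorPow (![0.7, 0.3] : Fin 2 → ℝ) q))
        (tensor (![0.5 / 1.01, 0.25 / 1.01, 0.2 / 1.01, 0.05 / 1.01, 0.01 / 1.01] : Fin 5 → ℝ)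
          (tensorPow (![0.7, 0.3] : Fin 2 → ℝ) q)) := by
  intro q _
  show ¬ Majorized (tensor ψ' (tensorPow catalyst q)) (tensor φ' (tensorPow catalyst q))
  have hpow : (0 : ℝ) < 0.7 ^ q := by positivity
  exact not_majorized_of_topSum_lt one_le_two (two_le_card_prod q)
    (by linarith [topSum_tensor_φ'_two_le q, le_topSum_tensor_ψ'_two q])
end
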